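/- arXiv:2412.08933 — 2 statements merged into one kernel-verified Lean document; each statement's English description precedes it below -/
import Mathlib

section
/- For probability densities p and q, the value of the adversarial objective at the optimal discriminator D = p/(p+q), namely V(p,q) = ∫ p ln(p/(p+q)) + q ln(q/(p+q)) dz, satisfies V(p,q) = 2·D_JS(p‖q) − 2 ln 2. -/
open MeasureTheory

/-- KL divergence between two densities w.r.t. a base measure `ν`. -/
noncomputable def klDivM {α : Type*} [MeasurableSpace α] (ν : MeasureTheory.Measure α)
    (p q : α → ℝ) : ℝ :=
  ∫ z, p z * Real.log (p z / q z) ∂ν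

/-- Jensen–Shannon divergence between two densities w.r.t. a base measure `ν`. -/
noncomputable def jsDivM {α : Type*} [MeasurableSpace α] (ν : MeasureTheory.Measure α)
    (p q : α → ℝ) : ℝ :=
  (1 / 2) * klDivM ν p (fun z => (p z + q z) / 2) +
    (1 / 2) * klDivM ν q (fun z => (p z + q z) / 2)

/-! Pointwise `p / ((p + q) / 2) = 2 · p / (p + q)`, so each Kullback–Leibler term against the
midpoint is the corresponding discriminator term plus `log 2 · ∫ p = log 2`. -/

lemma mul_log_div_half_eq {a c : ℝ} (hac : a ≠ 0 → c ≠ 0) :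
    a * Real.log (a / (c / 2)) = a * Real.log (a / c) + a * Real.log 2 := by
  rcases eq_or_ne a 0 with rfl | ha
  · simp
  · rw [div_div_eq_mul_div, mul_div_right_comm,
      Real.log_mul (div_ne_zero ha (hac ha)) two_ne_zero, mul_add]

lemma integral_mul_log_div_half_eq {α : Type*} [MeasurableSpace α] {ν : Measure α}
    {p r : α → ℝ} (hpr : ∀ z, p z ≠ 0 → r z ≠ 0)
    (hi : Integrable (fun z => p z * Real.log (p z / r z)) ν) (hp : Integrable p ν) :
    ∫ z, p z * Real.log (p z / (r z / 2)) ∂ν =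
      ∫ z, p z * Real.log (p z / r z) ∂ν + (∫ z, p z ∂ν) * Real.log 2 := by
  simp_rw [mul_log_div_half_eq (hpr _)]
  rw [integral_add hi (hp.mul_const _), integral_mul_const]

lemma klDivM_midpoint_eq {α : Type*} [MeasurableSpace α] {ν : Measure α} {p q : α → ℝ}
    (hp0 : ∀ z, 0 ≤ p z) (hq0 : ∀ z, 0 ≤ q z) (hp1 : ∫ z, p z ∂ν = 1)
    (hi : Integrable (fun z => p z * Real.log (p z / (p z + q z))) ν) :
    klDivM ν p (fun z => (p z + q z) / 2) =
      ∫ z, p z * Real.log (p z / (p z + q z)) ∂ν + Real.log 2 := by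
  have hpq : ∀ z, p z ≠ 0 → p z + q z ≠ 0 := fun z hz =>
    ((hp0 z).lt_of_ne' hz |>.trans_le (le_add_of_nonneg_right (hq0 z))).ne'
  rw [klDivM, integral_mul_log_div_half_eq hpq hi
    (Integrable.of_integral_ne_zero (hp1 ▸ one_ne_zero)), hp1, one_mul]

theorem adversarial_value_eq_two_jsDiv_sub_two_log_two_general {α : Type*} [MeasurableSpace α]
    (ν : Measure α) (p q : α → ℝ)
    (hp0 : ∀ z, 0 ≤ p z) (hq0 : ∀ z, 0 ≤ q z)
    (hp1 : ∫ z, p z ∂ν = 1) (hq1 : ∫ z, q z ∂ν = 1)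
    (hip : Integrable (fun z => p z * Real.log (p z / (p z + q z))) ν)
    (hiq : Integrable (fun z => q z * Real.log (q z / (p z + q z))) ν) :
    ∫ z, (p z * Real.log (p z / (p z + q z)) + q z * Real.log (q z / (p z + q z))) ∂ν =
      2 * jsDivM ν p q - 2 * Real.log 2 := by
  have hkq := klDivM_midpoint_eq hq0 hp0 hq1 (by simpa only [add_comm] using hiq)
  simp only [add_comm (q _)] at hkq
  rw [integral_add hip hiq, jsDivM, klDivM_midpoint_eq hp0 hq0 hp1 hip, hkq]
  ring

theorem adversarial_value_eq_two_jsDiv_sub_two_log_two {α : Type*} [MeasurableSpace α]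
    (ν : Measure α) (p q : α → ℝ)
    (hp0 : ∀ z, 0 ≤ p z) (hq0 : ∀ z, 0 ≤ q z)
    (hp1 : ∫ z, p z ∂ν = 1) (hq1 : ∫ z, q z ∂ν = 1)
    (hip : Integrable (fun z => p z * Real.log (p z / (p z + q z))) ν)
    (hiq : Integrable (fun z => q z * Real.log (q z / (p z + q z))) ν)
    (hp : Integrable p ν) (hq : Integrable q ν) :
    ∫ z, (p z * Real.log (p z / (p z + q z)) + q z * Real.log (q z / (p z + q z))) ∂ν =
      2 * jsDivM ν p q - 2 * Real.log 2 :=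
  adversarial_value_eq_two_jsDiv_sub_two_log_two_general ν p q hp0 hq0 hp1 hq1 hip hiq
end

section
/- For probability densities p and q, the adversarial objective at the optimal discriminator satisfies V(p,q) = ∫ p ln(p/(p+q)) + q ln(q/(p+q)) dz ≥ −2 ln 2, with equality if and only if p = q almost everywhere. -/
open MeasureTheory

lemma term_ineq {a s : ℝ} (ha : 0 ≤ a) (hs : 0 < s) :
    a - s / 2 ≤ a * Real.log (a / s) + a * Real.log 2 ∧
      (a * Real.log (a / s) + a * Real.log 2 = a - s / 2 ↔ a = s / 2) := by
  rcases eq_or_lt_of_le ha with h0 | hpos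
  · constructor
    · simp [← h0]
      linarith
    · constructor
      · intro h; simp [← h0] at h; linarith
      · intro h; exfalso; rw [← h0] at h; linarith
  · have h2a : 0 < 2 * a := by linarith
    have key : a * Real.log (a / s) + a * Real.log 2 = -(a * Real.log (s / (2 * a))) := by
      rw [Real.log_div (by positivity) hs.ne', Real.log_div hs.ne' (by positivity),
        Real.log_mul two_ne_zero hpos.ne']
      ring
    have hle : Real.log (s / (2 * a)) ≤ s / (2 * a) - 1 :=
      Real.log_le_sub_one_of_pos (by positivity)
    constructor
    · rw [key]
      have := mul_le_mul_of_nonneg_left hle ha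
      have he : a * (s / (2 * a) - 1) = s / 2 - a := by
        field_simp
      rw [he] at this
      linarith
    · constructor
      · intro h
        by_contra hne
        have hne1 : s / (2 * a) ≠ 1 := by
          intro h1
          apply hne
          field_simp at h1
          linarith
        have hlt : Real.log (s / (2 * a)) < s / (2 * a) - 1 :=
          Real.log_lt_sub_one_of_pos (by positivity) hne1
        have := mul_lt_mul_of_pos_left hlt hpos
        have he : a * (s / (2 * a) - 1) = s / 2 - a := by field_simp
        rw [he] at this
        rw [key] at h
        linarith
      · intro h
        subst h
        rw [key]
        have h1 : s / (2 * (s / 2)) = 1 := by field_simp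
        rw [h1, Real.log_one]
        ring

lemma pt_ineq {a b : ℝ} (ha : 0 ≤ a) (hb : 0 ≤ b) :
    0 ≤ a * Real.log (a / (a + b)) + b * Real.log (b / (a + b)) + (a + b) * Real.log 2 ∧
      (a * Real.log (a / (a + b)) + b * Real.log (b / (a + b)) + (a + b) * Real.log 2 = 0 ↔
        a = b) := by
  rcases eq_or_lt_of_le (by linarith : (0:ℝ) ≤ a + b) with hs0 | hs
  · have ha0 : a = 0 := by linarith
    have hb0 : b = 0 := by linarith
    simp [ha0, hb0]
  · obtain ⟨h1, h1e⟩ := term_ineq ha hs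
    obtain ⟨h2, h2e⟩ := term_ineq hb hs
    constructor
    · nlinarith [h1, h2]
    · constructor
      · intro h
        have e1 : a * Real.log (a / (a + b)) + a * Real.log 2 = a - (a + b) / 2 := by
          nlinarith [h1, h2]
        have e2 : b * Real.log (b / (a + b)) + b * Real.log 2 = b - (a + b) / 2 := by
          nlinarith [h1, h2]
        have := h1e.mp e1
        have := h2e.mp e2
        linarith
      · intro h
        subst h
        have := h1e.mpr (by ring)
        have := h2e.mpr (by ring)
        linarith

theorem adversarial_value_ge_neg_two_log_two {α : Type*} [MeasurableSpace α]
    (ν : Measure α) (p q : α → ℝ)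
    (hpm : Measurable p) (hqm : Measurable q)
    (hp0 : ∀ z, 0 ≤ p z) (hq0 : ∀ z, 0 ≤ q z)
    (hp1 : ∫ z, p z ∂ν = 1) (hq1 : ∫ z, q z ∂ν = 1)
    (hip : Integrable (fun z => p z * Real.log (p z / (p z + q z))) ν)
    (hiq : Integrable (fun z => q z * Real.log (q z / (p z + q z))) ν)
    (hp : Integrable p ν) (hq : Integrable q ν) :
    (-2 * Real.log 2 ≤
        ∫ z, (p z * Real.log (p z / (p z + q z)) + q z * Real.log (q z / (p z + q z))) ∂ν) ∧
      ((∫ z, (p z * Real.log (p z / (p z + q z)) + q z * Real.log (q z / (p z + q z))) ∂ν =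
          -2 * Real.log 2) ↔ p =ᵐ[ν] q) := by
  set f : α → ℝ := fun z =>
    p z * Real.log (p z / (p z + q z)) + q z * Real.log (q z / (p z + q z)) with hf
  set g : α → ℝ := fun z => f z + (p z + q z) * Real.log 2 with hgdef
  have hfi : Integrable f ν := hip.add hiq
  have hgi : Integrable g ν := hfi.add ((hp.add hq).mul_const _)
  have hg0 : ∀ z, 0 ≤ g z := fun z => by
    have := (pt_ineq (hp0 z) (hq0 z)).1
    simpa [hgdef, hf, add_assoc] using this
  have hgeq : ∀ z, (g z = 0 ↔ p z = q z) := fun z => by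
    have := (pt_ineq (hp0 z) (hq0 z)).2
    simpa [hgdef, hf, add_assoc] using this
  have hInt2 : ∫ z, (p z + q z) * Real.log 2 ∂ν = 2 * Real.log 2 := by
    rw [integral_mul_const, integral_add hp hq, hp1, hq1]
    ring
  have hi2 : Integrable (fun z => (p z + q z) * Real.log 2) ν := (hp.add hq).mul_const _
  have hgint : ∫ z, g z ∂ν = (∫ z, f z ∂ν) + 2 * Real.log 2 := by
    rw [show (∫ z, g z ∂ν) = ∫ z, (f z + (p z + q z) * Real.log 2) ∂ν from rfl,
      integral_add hfi hi2, hInt2]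
  have hgnn : 0 ≤ ∫ z, g z ∂ν := integral_nonneg hg0
  constructor
  · linarith [hgnn, hgint.symm.le, hgint.le]
  · rw [show (∫ z, f z ∂ν = -2 * Real.log 2) ↔ (∫ z, g z ∂ν = 0) by
      constructor <;> intro h <;> [rw [hgint, h]; rw [hgint] at h] <;> linarith]
    rw [integral_eq_zero_iff_of_nonneg hg0 hgi]
    constructor <;> intro h <;> filter_upwards [h] with z hz
    · exact (hgeq z).mp hz
    · exact (hgeq z).mpr hz
end
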